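/- arXiv:math/0607609 — 4 statements merged into one kernel-verified Lean document; each statement's English description precedes it below -/
import Mathlib

section
/- Let E be a topological space, let u_1, …, u_m : E → ℝ be continuous functions, and let u = max(u_1, …, u_m) pointwise. Then for every nonempty J ⊆ {1, …, m}, the frontier of the stratum E_J in E, i.e. (closure of E_J taken in E) \ E_J, is contained in the union of the strata E_{J'} over all J' with J ⊊ J' ⊆ {1, …, m}. -/
/-- The stratum `E_J` associated to functions `u_1, …, u_m` with pointwise maximum `umax`:
the set of points where `umax = u_j` for all `j ∈ J` and `umax > u_i` for all `i ∉ J`. -/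
def stratum {E : Type*} {m : ℕ} (u : Fin m → E → ℝ) (umax : E → ℝ)
    (J : Finset (Fin m)) : Set E :=
  {w | (∀ j ∈ J, umax w = u j w) ∧ ∀ i ∉ J, u i w < umax w}

/-!
Every point `z` lies in the stratum of its active set `{i | u i z = umax z}`. On `E_J` each
`u_j` with `j ∈ J` dominates all the `u_i`; these are closed conditions, so they persist on the
closure, where `umax = u_j` for `j ∈ J` follows. Hence a frontier point has an active set
containing `J`, and different from `J` since the point is not in `E_J`.
-/

section Stratum

variable {E : Type*} {m : ℕ} (u : Fin m → E → ℝ) (umax : E → ℝ)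

noncomputable def activeSet (z : E) : Finset (Fin m) :=
  Finset.univ.filter fun i => u i z = umax z

variable {u umax}

theorem mem_activeSet {z : E} {i : Fin m} : i ∈ activeSet u umax z ↔ u i z = umax z := by
  simp [activeSet]

theorem mem_stratum_activeSet {z : E} (hle : ∀ i, u i z ≤ umax z) :
    z ∈ stratum u umax (activeSet u umax z) :=
  ⟨fun _ hj => (mem_activeSet.mp hj).symm,
    fun i hi => (hle i).lt_of_ne (mem_activeSet.not.mp hi)⟩

theorem eq_of_mem_closure_stratum [TopologicalSpace E] (hu : ∀ j, Continuous (u j))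
    (hmax : ∀ z, IsGreatest (Set.range fun j => u j z) (umax z)) {J : Finset (Fin m)}
    {z : E} (hz : z ∈ closure (stratum u umax J)) {j : Fin m} (hj : j ∈ J) :
    umax z = u j z := by
  have hdom : stratum u umax J ⊆ {w | ∀ i, u i w ≤ u j w} := fun w hw i =>
    hw.1 j hj ▸ (hmax w).2 ⟨i, rfl⟩
  have hclosed : IsClosed {w | ∀ i, u i w ≤ u j w} := by
    simp only [Set.ofPred_forall]
    exact isClosed_iInter fun i => isClosed_le (hu i) (hu j)
  have hdom_z : ∀ i, u i z ≤ u j z := hclosed.closure_subset_iff.mpr hdom hz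
  exact (hmax z).unique ⟨⟨j, rfl⟩, by rintro _ ⟨i, rfl⟩; exact hdom_z i⟩

end Stratum

theorem stmt1_general {E : Type*} [TopologicalSpace E] {m : ℕ} (u : Fin m → E → ℝ)
    (hu : ∀ j, Continuous (u j)) (umax : E → ℝ)
    (hmax : ∀ z, IsGreatest (Set.range fun j => u j z) (umax z))
    (J : Finset (Fin m)) :
    closure (stratum u umax J) \ stratum u umax J ⊆
      ⋃ (J' : Finset (Fin m)) (_ : J ⊂ J'), stratum u umax J' := by
  rintro z ⟨hz_closure, hz_not⟩
  have hz_active : z ∈ stratum u umax (activeSet u umax z) :=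
    mem_stratum_activeSet fun i => (hmax z).2 ⟨i, rfl⟩
  have hJ_sub : J ⊆ activeSet u umax z := fun j hj =>
    mem_activeSet.mpr (eq_of_mem_closure_stratum hu hmax hz_closure hj).symm
  have hJ_ne : J ≠ activeSet u umax z := by
    rintro rfl
    exact hz_not hz_active
  exact Set.mem_iUnion₂.mpr ⟨_, hJ_sub.ssubset_of_ne hJ_ne, hz_active⟩

/-- For continuous `u_1, …, u_m` with pointwise maximum `umax`, the frontier of the stratum
`E_J` is contained in the union of the strata `E_{J'}` over all `J'` strictly containing `J`. -/
theorem stmt1 {E : Type*} [TopologicalSpace E] {m : ℕ} (u : Fin m → E → ℝ)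
    (hu : ∀ j, Continuous (u j)) (umax : E → ℝ)
    (hmax : ∀ z, IsGreatest (Set.range fun j => u j z) (umax z))
    (J : Finset (Fin m)) (hJ : J.Nonempty) :
    closure (stratum u umax J) \ stratum u umax J ⊆
      ⋃ (J' : Finset (Fin m)) (_ : J ⊂ J'), stratum u umax J' :=
  stmt1_general u hu umax hmax J
end

section
/- Let M be a module over ℂ, let ι : M → ExteriorAlgebra ℂ M be the canonical embedding, let m ≥ 1, and let a_1, …, a_m, b_1, …, b_m ∈ M. Set c_t = ι(a_t + b_t) and e_t = i • ι(b_t − a_t) for 1 ≤ t ≤ m. Then in ExteriorAlgebra ℂ M one has (−1)^{m(m+1)/2} · 2^{−m} · (e_1 * ⋯ * e_m) * (c_1 * ⋯ * c_m) = ∏_{t=1}^{m} (i • (ι(a_t) * ι(b_t))), where the product on the right is taken in increasing order of t. (This is the algebraic identity behind Lemma 1: with a_t = ∂ρ_t and b_t = ∂̄ρ_t it expresses d^cρ_1∧⋯∧d^cρ_m∧dρ_1∧⋯∧dρ_m as a signed multiple of (i∂ρ_1∧∂̄ρ_1)∧⋯∧(i∂ρ_m∧∂̄ρ_m).) -/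
/-!
Since degree-one elements anticommute, moving each `c_t` leftwards past `e_{t+1}, …, e_m`
turns `(e_1 ⋯ e_m)(c_1 ⋯ c_m)` into `(-1)^(m choose 2) ∏ (e_t c_t)`, and
`e_t c_t = i ι(b_t - a_t) ι(a_t + b_t) = -2i ι(a_t) ι(b_t)` because `ι` squares to zero.
The signs cancel since `m(m+1)/2 = (m choose 2) + m`.
-/

open ExteriorAlgebra

section ListProd

variable {R A : Type*} [CommRing R] [Ring A] [Algebra R A]

theorem List.prod_ofFn_smul {m : ℕ} (r : R) (x : Fin m → A) :
    (List.ofFn fun t => r • x t).prod = r ^ m • (List.ofFn x).prod := by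
  induction m with
  | zero => simp
  | succ m ih =>
    rw [List.ofFn_succ, List.prod_cons, ih, List.ofFn_succ, List.prod_cons,
      smul_mul_smul_comm, pow_succ']

theorem List.mul_prod_eq_neg_one_pow_smul_prod_mul {z : A} {l : List A}
    (h : ∀ x ∈ l, z * x = -(x * z)) :
    z * l.prod = (-1 : R) ^ l.length • (l.prod * z) := by
  induction l with
  | nil => simp
  | cons x l ih =>
    rw [List.prod_cons, ← mul_assoc, h x List.mem_cons_self, neg_mul, mul_assoc,
      ih fun y hy => h y (List.mem_cons_of_mem x hy), List.length_cons, pow_succ, mul_smul,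
      neg_one_smul, mul_smul_comm, ← mul_assoc, smul_neg]

-- The sign is that of the shuffle `x₁ ⋯ xₘ y₁ ⋯ yₘ ↦ x₁ y₁ ⋯ xₘ yₘ`, which has `m.choose 2`
-- inversions.
theorem List.prod_ofFn_mul_prod_ofFn_of_anticomm {m : ℕ} (x y : Fin m → A)
    (h : ∀ i j, x i * y j = -(y j * x i)) :
    (List.ofFn x).prod * (List.ofFn y).prod =
      (-1 : R) ^ m.choose 2 • (List.ofFn fun t => x t * y t).prod := by
  induction m with
  | zero => simp
  | succ m ih =>
    simp only [List.ofFn_succ', List.concat_eq_append, List.prod_append, List.prod_cons,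
      List.prod_nil, mul_one]
    have hswap : x (Fin.last m) * (List.ofFn fun t => y t.castSucc).prod =
        (-1 : R) ^ m • ((List.ofFn fun t => y t.castSucc).prod * x (Fin.last m)) := by
      rw [List.mul_prod_eq_neg_one_pow_smul_prod_mul (R := R) (by simp [h]), List.length_ofFn]
    calc _ = (List.ofFn fun t => x t.castSucc).prod *
          (x (Fin.last m) * (List.ofFn fun t => y t.castSucc).prod) * y (Fin.last m) := by
          simp only [mul_assoc]
      _ = _ := by
        rw [hswap, mul_smul_comm, smul_mul_assoc, ← mul_assoc, ← mul_assoc,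
          ih _ _ fun i j => h _ _, smul_mul_assoc, smul_mul_assoc, smul_smul,
          Nat.choose_succ_succ', Nat.choose_one_right, pow_add, mul_assoc]

end ListProd

namespace ExteriorAlgebra

variable {R M : Type*} [CommRing R] [AddCommGroup M] [Module R M]

theorem ι_mul_ι_anticomm (u v : M) : ι R u * ι R v = -(ι R v * ι R u) :=
  eq_neg_of_add_eq_zero_left (ι_add_mul_swap u v)

theorem ι_sub_mul_ι_add (a b : M) :
    ι R (b - a) * ι R (a + b) = (-2 : R) • (ι R a * ι R b) := by
  rw [map_sub, map_add, sub_mul, mul_add, mul_add, ι_sq_zero, ι_sq_zero, ι_mul_ι_anticomm b a]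
  module

end ExteriorAlgebra

theorem stmt3_general {M : Type*} [AddCommGroup M] [Module ℂ M] {m : ℕ}
    (a b : Fin m → M) :
    ((-1 : ℂ) ^ (m * (m + 1) / 2) * (2 : ℂ)⁻¹ ^ m) •
        ((List.ofFn fun t : Fin m => Complex.I • ι ℂ (b t - a t)).prod *
          (List.ofFn fun t : Fin m => ι ℂ (a t + b t)).prod) =
      (List.ofFn fun t : Fin m => Complex.I • (ι ℂ (a t) * ι ℂ (b t))).prod := by
  have hanticomm (u v : M) : Complex.I • ι ℂ u * ι ℂ v = -(ι ℂ v * (Complex.I • ι ℂ u)) := by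
    rw [smul_mul_assoc, mul_smul_comm, ι_mul_ι_anticomm, smul_neg]
  have hpair (t : Fin m) : Complex.I • ι ℂ (b t - a t) * ι ℂ (a t + b t) =
      (-2 : ℂ) • Complex.I • (ι ℂ (a t) * ι ℂ (b t)) := by
    rw [smul_mul_assoc, ι_sub_mul_ι_add, smul_comm]
  have hsign : (-1 : ℂ) ^ (m * (m + 1) / 2) * (-1) ^ m.choose 2 = (-1) ^ m := by
    have htriangle : m * (m + 1) / 2 = m.choose 2 + m := by
      rw [Nat.choose_two_right, ← Nat.triangle_succ, Nat.add_sub_cancel, mul_comm]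
    rw [htriangle, pow_add, mul_right_comm, ← pow_add, Even.neg_one_pow ⟨_, rfl⟩, one_mul]
  rw [List.prod_ofFn_mul_prod_ofFn_of_anticomm (R := ℂ) _ _ fun i j => hanticomm _ _,
    funext hpair, List.prod_ofFn_smul, smul_smul, smul_smul, mul_right_comm _ _ ((-1) ^ _),
    hsign, ← mul_pow, ← mul_pow]
  norm_num

/-- In the exterior algebra of a `ℂ`-module, with `c_t = ι(a_t + b_t)` and
`e_t = i • ι(b_t − a_t)`, one has
`(−1)^{m(m+1)/2} · 2^{−m} · (e_1 ⋯ e_m) * (c_1 ⋯ c_m) = ∏_t (i • (ι a_t * ι b_t))`. -/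
theorem stmt3 {M : Type*} [AddCommGroup M] [Module ℂ M] {m : ℕ} (hm : 1 ≤ m)
    (a b : Fin m → M) :
    ((-1 : ℂ) ^ (m * (m + 1) / 2) * (2 : ℂ)⁻¹ ^ m) •
        ((List.ofFn fun t : Fin m => Complex.I • ι ℂ (b t - a t)).prod *
          (List.ofFn fun t : Fin m => ι ℂ (a t + b t)).prod) =
      (List.ofFn fun t : Fin m => Complex.I • (ι ℂ (a t) * ι ℂ (b t))).prod :=
  stmt3_general a b
end

section
/- Let M be a module over a commutative ring R, let ι : M → ExteriorAlgebra R M be the canonical embedding, let ℓ ≥ 1, and let c_1, …, c_ℓ ∈ M. Define δ = ∏_{s=1}^{ℓ−1} ι(c_s − c_{s+1}) (product taken in increasing order of s; δ = 1 if ℓ = 1). Then for every t with 1 ≤ t ≤ ℓ, one has ι(c_t) * δ = (−1)^{ℓ−1} · ι(c_1) * ι(c_2) * ⋯ * ι(c_ℓ). (This is identity (2) of Lemma 2, with c_t playing the role of d^c u_{j_t}.) -/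
/-!
Since `ι(c_t - c_{t+1})` is one of the factors of `δ`, it annihilates `δ` from the left, so
`ι(c_t) δ = ι(c_{t+1}) δ` and `ι(c_t) δ` does not depend on `t`. For `t = 1`, the first factor
gives `ι(c_1) ι(c_1 - c_2) = -ι(c_1) ι(c_2)`, and induction on `ℓ` finishes the proof.
-/

open ExteriorAlgebra

namespace ExteriorAlgebra

variable (R : Type*) {M : Type*} [CommRing R] [AddCommGroup M] [Module R M]

def consecutiveDiffProd {l : ℕ} (c : Fin (l + 1) → M) : ExteriorAlgebra R M :=
  (List.ofFn fun s : Fin l => ι R (c s.castSucc - c s.succ)).prod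

variable {R}

theorem consecutiveDiffProd_succ {l : ℕ} (c : Fin (l + 2) → M) :
    consecutiveDiffProd R c = ι R (c 0 - c 1) * consecutiveDiffProd R (Fin.tail c) := by
  simp only [consecutiveDiffProd, List.ofFn_succ, List.prod_cons, Fin.castSucc_zero,
    Fin.succ_zero_eq_one, Fin.succ_castSucc, Fin.tail]

theorem ι_mul_consecutiveDiffProd_eq_zero {l : ℕ} (c : Fin (l + 1) → M) (s : Fin l) :
    ι R (c s.castSucc - c s.succ) * consecutiveDiffProd R c = 0 :=
  ι_mul_prod_list (fun s : Fin l => c s.castSucc - c s.succ) s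

theorem ι_mul_consecutiveDiffProd_eq_ι_zero_mul {l : ℕ} (c : Fin (l + 1) → M)
    (t : Fin (l + 1)) :
    ι R (c t) * consecutiveDiffProd R c = ι R (c 0) * consecutiveDiffProd R c := by
  induction t using Fin.induction with
  | zero => rfl
  | succ t ih =>
    have hstep : ι R (c t.succ) = ι R (c t.castSucc) - ι R (c t.castSucc - c t.succ) := by
      rw [map_sub, sub_sub_cancel]
    rw [hstep, sub_mul, ι_mul_consecutiveDiffProd_eq_zero, sub_zero, ih]

theorem ι_zero_mul_consecutiveDiffProd {l : ℕ} (c : Fin (l + 1) → M) :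
    ι R (c 0) * consecutiveDiffProd R c =
      ((-1 : R) ^ l) • (List.ofFn fun s : Fin (l + 1) => ι R (c s)).prod := by
  induction l with
  | zero => simp [consecutiveDiffProd]
  | succ l ih =>
    have hfirst : ι R (c 0) * ι R (c 0 - c 1) = -(ι R (c 0) * ι R (c 1)) := by
      rw [map_sub, mul_sub, ι_sq_zero, zero_sub]
    rw [consecutiveDiffProd_succ, ← mul_assoc, hfirst, neg_mul, mul_assoc]
    rw [show c 1 = Fin.tail c 0 from rfl, ih, mul_smul_comm, pow_succ', mul_smul, neg_one_smul,
      List.ofFn_succ (f := fun s => ι R (c s)), List.prod_cons]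
    rfl

end ExteriorAlgebra

/-- Identity (2) of Lemma 2: with `δ = ∏_{s=1}^{ℓ−1} ι(c_s − c_{s+1})` (here `ℓ = l + 1`),
for every `t` one has `ι(c_t) * δ = (−1)^{ℓ−1} · ι(c_1) * ⋯ * ι(c_ℓ)`. -/
theorem stmt4 {R M : Type*} [CommRing R] [AddCommGroup M] [Module R M] {l : ℕ}
    (c : Fin (l + 1) → M) (t : Fin (l + 1)) :
    ι R (c t) * (List.ofFn fun s : Fin l => ι R (c s.castSucc - c s.succ)).prod =
      ((-1 : R) ^ l) • (List.ofFn fun s : Fin (l + 1) => ι R (c s)).prod :=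
  (ι_mul_consecutiveDiffProd_eq_ι_zero_mul c t).trans (ι_zero_mul_consecutiveDiffProd c)
end

section
/- Let M be a module over a commutative ring R, let ι : M → ExteriorAlgebra R M be the canonical embedding, let ℓ ≥ 1, and let c_1, …, c_ℓ ∈ M. Then ∑_{t=1}^{ℓ} (−1)^{ℓ−t} · (ι(c_1) * ⋯ * ι(c_{t−1}) * ι(c_{t+1}) * ⋯ * ι(c_ℓ)) = ∏_{s=1}^{ℓ−1} ι(c_s − c_{s+1}), where each product of the ι(c_s) is taken in increasing order of the index s, the t-th summand omits the factor ι(c_t), and the right-hand product is 1 when ℓ = 1. (This is identity (3) of Lemma 2.) -/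
/-!
Induction on `ℓ`, splitting off the last vector. Multiply the identity for `c_1, …, c_{ℓ-1}` on
the right by `ι(c_{ℓ-1} - c_ℓ)`. In the `ι(c_{ℓ-1})` part every summand already containing
`ι(c_{ℓ-1})` dies, leaving only the full product `ι(c_1) ⋯ ι(c_{ℓ-1})`, which is the new summand
omitting `c_ℓ`; the `-ι(c_ℓ)` part is exactly the remaining new summands, with signs shifted by one.
-/

open ExteriorAlgebra

theorem List.ofFn_castSucc_succAbove {α : Type*} {n : ℕ} (f : Fin (n + 2) → α) (t : Fin (n + 1)) :
    List.ofFn (fun s => f (t.castSucc.succAbove s)) =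
      (List.ofFn fun s : Fin n => f (t.succAbove s).castSucc).concat (f (Fin.last _)) := by
  rw [List.ofFn_succ', Fin.succAbove_castSucc_of_le t _ (Fin.le_last t), Fin.succ_last]
  simp only [Fin.castSucc_succAbove_castSucc]

namespace ExteriorAlgebra

variable {R M : Type*} [CommRing R] [AddCommGroup M] [Module R M]

theorem prod_ofFn_ι_mul_ι_self {n : ℕ} (v : Fin n → M) (j : Fin n) :
    (List.ofFn fun s => ι R (v s)).prod * ι R (v j) = 0 := by
  have h := (ιMulti R (n + 1)).map_eq_zero_of_eq (Fin.snoc v (v j)) (i := j.castSucc)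
    (j := Fin.last n) (by simp) (Fin.castSucc_lt_last j).ne
  rw [ιMulti_apply, List.ofFn_succ', List.prod_concat] at h
  simpa only [Fin.snoc_castSucc, Fin.snoc_last] using h

theorem prod_ofFn_ι_succAbove_mul_ι_last {n : ℕ} (v : Fin (n + 1) → M) (t : Fin (n + 1)) :
    (List.ofFn fun s => ι R (v (t.succAbove s))).prod * ι R (v (Fin.last n)) =
      if t = Fin.last n then (List.ofFn fun s => ι R (v s)).prod else 0 := by
  split_ifs with ht
  · rw [ht, List.ofFn_succ' (fun s => ι R (v s)), List.prod_concat, Fin.succAbove_last]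
  · obtain ⟨j, hj⟩ := Fin.exists_succAbove_eq (Ne.symm ht)
    rw [← hj]
    exact prod_ofFn_ι_mul_ι_self (v ∘ t.succAbove) j

end ExteriorAlgebra

/-- Identity (3) of Lemma 2: with `ℓ = l + 1`,
`∑_{t=1}^{ℓ} (−1)^{ℓ−t} ι(c_1) ⋯ ι(c_{t−1}) * ι(c_{t+1}) ⋯ ι(c_ℓ) = ∏_{s=1}^{ℓ−1} ι(c_s − c_{s+1})`,
where the `t`-th summand omits the factor `ι(c_t)`. -/
theorem stmt5 {R M : Type*} [CommRing R] [AddCommGroup M] [Module R M] {l : ℕ}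
    (c : Fin (l + 1) → M) :
    (∑ t : Fin (l + 1), ((-1 : R) ^ (l - t.val)) •
        (List.ofFn fun s : Fin l => ι R (c (t.succAbove s))).prod) =
      (List.ofFn fun s : Fin l => ι R (c s.castSucc - c s.succ)).prod := by
  induction l with
  | zero => simp
  | succ l ih =>
    let b := c ∘ Fin.castSucc
    let Q : Fin (l + 1) → ExteriorAlgebra R M := fun t =>
      (List.ofFn fun s : Fin l => ι R (b (t.succAbove s))).prod
    calc _ = (List.ofFn fun s => ι R (b s)).prod +
          ∑ t : Fin (l + 1), (-1 : R) ^ (l + 1 - t.val) • (Q t * ι R (c (Fin.last _))) := by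
          rw [Fin.sum_univ_castSucc, add_comm, Fin.succAbove_last]
          simp only [List.ofFn_castSucc_succAbove (fun i => ι R (c i)), List.prod_concat,
            Fin.val_last, Fin.val_castSucc, Nat.sub_self, pow_zero, one_smul, Q, b,
            Function.comp_apply]
      _ = ∑ t, (-1 : R) ^ (l - t.val) • (Q t * ι R (b (Fin.last l))) -
          ∑ t, (-1 : R) ^ (l - t.val) • (Q t * ι R (c (Fin.last _))) := by
          simp only [Q, prod_ofFn_ι_succAbove_mul_ι_last, smul_ite, smul_zero,
            Finset.sum_ite_eq', Finset.mem_univ, if_true, Fin.val_last, Nat.sub_self, pow_zero,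
            one_smul, sub_eq_add_neg, ← Finset.sum_neg_distrib, ← neg_smul]
          congr 1
          refine Finset.sum_congr rfl fun t _ => ?_
          rw [Nat.sub_add_comm t.is_le, pow_succ, mul_neg_one]
      _ = (∑ t, (-1 : R) ^ (l - t.val) • Q t) * ι R (b (Fin.last l) - c (Fin.last _)) := by
          simp only [map_sub, mul_sub, Finset.sum_mul, smul_mul_assoc]
      _ = _ := by
          rw [ih b, List.ofFn_succ', List.prod_concat]
          simp only [b, Function.comp_apply, Fin.succ_castSucc, Fin.succ_last]
end
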